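/- Let K be a commutative ring, P a finite poset, U ⊆ P a sieve (downward-closed subset) with inclusion u : U ↪ P, and F ∈ (K-Mod)^P. Then the unit morphism F → u_* u^* F of the adjunction (u^*, u_*) is an isomorphism if and only if F(x) = 0 for all x ∈ P \ U. -/

import Mathlib

/-!
On `p ∈ U` the unit of `u^* ⊣ u_*` is split by the counit, which is invertible because `u` is
fully faithful; so it is always invertible there. For `p ∉ U` the comma category `p ↓ u` is empty
because `U` is a sieve, hence `(u_* u^* F)(p)` is an empty limit, i.e. zero, and the unit at `p`
is invertible exactly when `F(p) = 0`.
-/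

open CategoryTheory CategoryTheory.Limits

universe u

variable (K : Type u) [CommRing K] (P : Type u) [PartialOrder P]

/-- The inclusion functor of a subposet (a subset of `P` with the induced order). -/
def inclFunctor (U : Set P) : (↥U) ⥤ P :=
  (Subtype.mono_coe (· ∈ U)).functor

instance (U : Set P) : (inclFunctor P U).Full where
  map_surjective f := ⟨homOfLE (Subtype.coe_le_coe.mp (leOfHom f)), rfl⟩

lemma isEmpty_structuredArrow_inclFunctor_of_isLowerSet {U : Set P} (hU : IsLowerSet U) {p : P}
    (hp : p ∉ U) : IsEmpty (StructuredArrow p (inclFunctor P U)) :=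
  ⟨fun f => hp (hU (leOfHom f.hom) f.right.2)⟩

namespace CategoryTheory.Functor

variable {C D H : Type*} [Category C] [Category D] [Category H] (L : C ⥤ D)
  [∀ G : C ⥤ H, L.HasPointwiseRightKanExtension G]

lemma isZero_ran_obj_obj_of_isEmpty [HasZeroMorphisms H] (G : C ⥤ H) (X : D)
    [IsEmpty (StructuredArrow X L)] : IsZero ((L.ran.obj G).obj X) :=
  have hlim : IsTerminal (limit (StructuredArrow.proj X L ⋙ G)) :=
    isLimitEquivIsTerminalOfIsEmpty (C := H) (c := limit.cone _) (limit.isLimit _)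
  hlim.isZero.of_iso (L.ranObjObjIsoLimit G X)

lemma isIso_ranAdjunction_unit_app_app_obj [L.Full] [L.Faithful] (G : D ⥤ H) (X : C) :
    IsIso (((L.ranAdjunction H).unit.app G).app (L.obj X)) :=
  isIso_of_comp_hom_eq_id _ (L.ranCounit_app_app_ranAdjunction_unit_app_app G X)

end CategoryTheory.Functor

lemma CategoryTheory.Limits.IsZero.isIso_iff_isZero_source {C : Type*} [Category C]
    [HasZeroMorphisms C] {X Y : C} (hY : IsZero Y) (f : X ⟶ Y) : IsIso f ↔ IsZero X :=
  ⟨fun _ => hY.of_iso (asIso f), fun hX => hX.isIso hY f⟩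

theorem statement_12 (U : Set P)
    (hU : ∀ ⦃a b : P⦄, a ≤ b → b ∈ U → a ∈ U) (F : P ⥤ ModuleCat.{u} K) :
    IsIso (((inclFunctor P U).ranAdjunction (ModuleCat.{u} K)).unit.app F) ↔
      ∀ p : P, p ∉ U → IsZero (F.obj p) := by
  set L := inclFunctor P U
  rw [NatTrans.isIso_iff_isIso_app]
  have hzero (p : P) (hp : p ∉ U) : IsZero ((L.ran.obj (L ⋙ F)).obj p) :=
    have := isEmpty_structuredArrow_inclFunctor_of_isLowerSet P (fun _ _ hba ha => hU hba ha) hp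
    L.isZero_ran_obj_obj_of_isEmpty _ p
  refine ⟨fun h p hp => ?_, fun h p => ?_⟩
  · exact ((hzero p hp).isIso_iff_isZero_source _).mp (h p)
  · by_cases hp : p ∈ U
    · exact L.isIso_ranAdjunction_unit_app_app_obj F ⟨p, hp⟩
    · exact ((hzero p hp).isIso_iff_isZero_source _).mpr (h p hp)
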